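/- arXiv:2507.23231 — 6 statements merged into one kernel-verified Lean document; each statement's English description precedes it below -/
import Mathlib

section
/- Let G be a finite simple graph that is connected, bipartite, and has at least one edge. Then the symmetric lift HL'₂(G) has exactly two connected components. -/
open SimpleGraph

/-- The symmetric lift `HL'₂(G)`: vertices are ordered pairs `(u,v)` with `{u,v}` an edge of `G`;
distinct vertices `(u,v)` and `(x,y)` are adjacent iff `u = x` or `v = y`. -/
def symLift {V : Type*} (G : SimpleGraph V) : SimpleGraph {p : V × V // G.Adj p.1 p.2} where
  Adj a b := a ≠ b ∧ (a.val.1 = b.val.1 ∨ a.val.2 = b.val.2)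
  symm := ⟨fun _ _ h => ⟨h.1.symm, h.2.imp Eq.symm Eq.symm⟩⟩
  loopless := ⟨fun _ h => h.1 rfl⟩

/-
Fix a proper 2-coloring `c` of `G`. Two vertices of `HL'₂(G)` that share their second
coordinate have first coordinates both colored differently from it, hence colored alike, so
`(u, v) ↦ c u` is constant on components. Conversely, walking along `G` one can always move, inside
a component, to a vertex having any prescribed vertex `x` of `G` as one of its coordinates; by the
coloring, it has `x` as first coordinate when `x` has the right color. So the components are the
two color classes, and an edge `uv` provides both, via `(u, v)` and `(v, u)`.
-/

namespace SimpleGraph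

variable {V : Type*} {G : SimpleGraph V}

lemma symLift_reachable_of_fst_eq {a b : {p : V × V // G.Adj p.1 p.2}} (h : a.1.1 = b.1.1) :
    (symLift G).Reachable a b := by
  by_cases hab : a = b
  · exact hab ▸ Reachable.refl a
  · exact Adj.reachable ⟨hab, Or.inl h⟩

lemma symLift_reachable_of_snd_eq {a b : {p : V × V // G.Adj p.1 p.2}} (h : a.1.2 = b.1.2) :
    (symLift G).Reachable a b := by
  by_cases hab : a = b
  · exact hab ▸ Reachable.refl a
  · exact Adj.reachable ⟨hab, Or.inr h⟩

lemma Walk.exists_symLift_reachable {u x : V} (p : G.Walk u x)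
    (a : {p : V × V // G.Adj p.1 p.2}) (ha : a.1.1 = u ∨ a.1.2 = u) :
    ∃ b, (symLift G).Reachable a b ∧ (b.1.1 = x ∨ b.1.2 = x) := by
  induction p generalizing a with
  | nil => exact ⟨a, Reachable.refl a, ha⟩
  | @cons u w x huw p ih =>
    obtain ⟨b, hab, hb⟩ : ∃ b, (symLift G).Reachable a b ∧ (b.1.1 = w ∨ b.1.2 = w) := by
      rcases ha with ha | ha
      · exact ⟨⟨(u, w), huw⟩, symLift_reachable_of_fst_eq ha, Or.inr rfl⟩
      · exact ⟨⟨(w, u), huw.symm⟩, symLift_reachable_of_snd_eq ha, Or.inl rfl⟩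
    obtain ⟨b', hbb', hb'⟩ := ih b hb
    exact ⟨b', hab.trans hbb', hb'⟩

lemma Coloring.symLift_fst_eq_of_adj (c : G.Coloring (Fin 2)) {a b : {p : V × V // G.Adj p.1 p.2}}
    (h : (symLift G).Adj a b) : c a.1.1 = c b.1.1 := by
  rcases h.2 with h | h
  · rw [h]
  · have ha := c.valid a.2
    have hb := c.valid b.2
    rw [h] at ha
    omega

lemma Coloring.symLift_fst_eq_of_reachable (c : G.Coloring (Fin 2))
    {a b : {p : V × V // G.Adj p.1 p.2}} (h : (symLift G).Reachable a b) :
    c a.1.1 = c b.1.1 := by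
  obtain ⟨p⟩ := h
  induction p with
  | nil => rfl
  | cons h _ ih => exact (c.symLift_fst_eq_of_adj h).trans ih

lemma Coloring.symLift_reachable_iff (hG : G.Preconnected) (c : G.Coloring (Fin 2))
    {a b : {p : V × V // G.Adj p.1 p.2}} :
    (symLift G).Reachable a b ↔ c a.1.1 = c b.1.1 := by
  refine ⟨c.symLift_fst_eq_of_reachable, fun hc => ?_⟩
  obtain ⟨p⟩ := hG a.1.1 b.1.1
  obtain ⟨a', haa', ha'⟩ := p.exists_symLift_reachable a (Or.inl rfl)
  rcases ha' with ha' | ha'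
  · exact haa'.trans (symLift_reachable_of_fst_eq ha')
  · refine absurd ?_ (c.valid a'.2)
    rw [ha', ← hc]
    exact (c.symLift_fst_eq_of_reachable haa').symm

end SimpleGraph

theorem stmt_1_general {V : Type*} (G : SimpleGraph V)
    (hconn : G.Connected) (hbip : G.Colorable 2) (hedge : G.edgeSet.Nonempty) :
    Nat.card (symLift G).ConnectedComponent = 2 := by
  obtain ⟨c⟩ := hbip
  obtain ⟨u, v, huv⟩ := ne_bot_iff_exists_adj.mp (edgeSet_nonempty.mp hedge)
  let color : (symLift G).ConnectedComponent → Fin 2 :=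
    ConnectedComponent.lift (fun a => c a.1.1)
      (fun _ _ p _ => c.symLift_fst_eq_of_reachable ⟨p⟩)
  have hinj : Function.Injective color := by
    refine ConnectedComponent.ind₂ fun a b h => ?_
    exact ConnectedComponent.eq.mpr ((c.symLift_reachable_iff hconn.preconnected).mpr h)
  have hsurj : Function.Surjective color := by
    intro i
    have : c u ≠ c v := c.valid huv
    rcases (by omega : i = c u ∨ i = c v) with rfl | rfl
    · exact ⟨(symLift G).connectedComponentMk ⟨(u, v), huv⟩, rfl⟩
    · exact ⟨(symLift G).connectedComponentMk ⟨(v, u), huv.symm⟩, rfl⟩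
  rw [Nat.card_eq_of_bijective color ⟨hinj, hsurj⟩, Nat.card_fin]

theorem stmt_1 {V : Type*} [Fintype V] (G : SimpleGraph V)
    (hconn : G.Connected) (hbip : G.Colorable 2) (hedge : G.edgeSet.Nonempty) :
    Nat.card (symLift G).ConnectedComponent = 2 :=
  stmt_1_general G hconn hbip hedge
end

section
/- For every finite simple graph G (with a linear order on its vertex set, for the ordered lift), both the ordered lift HL₂(G) and the symmetric lift HL'₂(G) are claw-free and odd-hole-free: neither graph contains an induced subgraph isomorphic to the complete bipartite graph K_{1,3}, and neither graph contains an induced cycle of odd length at least 5. -/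
open SimpleGraph

/-- The ordered lift `HL₂(G)` with respect to a linear order `r` on the vertices:
vertices are ordered pairs `(u,v)` with `u < v` and `{u,v}` an edge of `G`;
distinct vertices `(u,v)` and `(x,y)` are adjacent iff `u = x` or `v = y`. -/
def orderedLift {V : Type*} (G : SimpleGraph V) (r : LinearOrder V) :
    SimpleGraph {p : V × V // r.lt p.1 p.2 ∧ G.Adj p.1 p.2} where
  Adj a b := a ≠ b ∧ (a.val.1 = b.val.1 ∨ a.val.2 = b.val.2)
  symm := ⟨fun _ _ h => ⟨h.1.symm, h.2.imp Eq.symm Eq.symm⟩⟩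
  loopless := ⟨fun _ h => h.1 rfl⟩

/-!
Both lifts are line graphs of bipartite multigraphs: the vertex `(u, v)` is an edge from `u` in a
left copy of `V` to `v` in a right copy, and two such edges are adjacent iff they share an
endpoint. Each edge of the lift therefore has a kind, "same first coordinate" or "same second
coordinate", and along an induced path `a - b - c` the two edges have different kinds. The three
edges at the centre of a claw cannot pairwise have different kinds, and around an induced cycle
the kinds alternate, which is impossible when the cycle is odd.
-/

namespace SimpleGraph

variable {W X Y : Type*}

/-- The line graph of the bipartite multigraph on `X ⊕ Y` whose edge `w` joins `f w` and `g w`. -/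
def bipartiteLineGraph (f : W → X) (g : W → Y) : SimpleGraph W where
  Adj a b := a ≠ b ∧ (f a = f b ∨ g a = g b)
  symm := ⟨fun _ _ h => ⟨h.1.symm, h.2.imp Eq.symm Eq.symm⟩⟩
  loopless := ⟨fun _ h => h.1 rfl⟩

theorem orderedLift_eq_bipartiteLineGraph {V : Type*} (G : SimpleGraph V) (r : LinearOrder V) :
    orderedLift G r = bipartiteLineGraph (fun p => p.val.1) (fun p => p.val.2) := rfl

theorem symLift_eq_bipartiteLineGraph {V : Type*} (G : SimpleGraph V) :
    symLift G = bipartiteLineGraph (fun p => p.val.1) (fun p => p.val.2) := rfl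

theorem cycleGraph_adj_add_one {n : ℕ} (i : Fin (n + 2)) : (cycleGraph (n + 2)).Adj i (i + 1) := by
  rw [cycleGraph_adj]
  simp

theorem cycleGraph_not_adj_add_two {n : ℕ} (i : Fin (n + 4)) :
    ¬ (cycleGraph (n + 4)).Adj i (i + 1 + 1) := by
  have h₁ : i - (i + 1 + 1) = -(1 + 1) := by abel
  have h₂ : i + 1 + 1 - i = 1 + 1 := by abel
  rw [cycleGraph_adj, h₁, h₂, neg_eq_iff_add_eq_zero]
  simp only [Fin.ext_iff, Fin.val_add, Fin.val_one, Fin.val_zero]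
  rw [Nat.mod_eq_of_lt (a := 2) (by omega), Nat.mod_eq_of_lt (by omega)]
  omega

theorem _root_.Fin.ne_add_one_add_one {n : ℕ} (i : Fin (n + 4)) : i ≠ i + 1 + 1 := by
  rw [ne_eq, add_assoc i, left_eq_add, Fin.ext_iff, Fin.val_add, Fin.val_one, Fin.val_zero,
    Nat.mod_eq_of_lt (by omega)]
  omega

namespace bipartiteLineGraph

variable {f : W → X} {g : W → Y}

theorem apply_eq_iff_apply_ne_of_induced_path {a b c : W}
    (hab : (bipartiteLineGraph f g).Adj a b) (hbc : (bipartiteLineGraph f g).Adj b c) (hac : a ≠ c)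
    (hnac : ¬ (bipartiteLineGraph f g).Adj a c) : f a = f b ↔ f b ≠ f c := by
  obtain ⟨-, hab⟩ := hab
  obtain ⟨-, hbc⟩ := hbc
  have hnac : f a ≠ f c ∧ g a ≠ g c := by
    simpa [bipartiteLineGraph, hac, not_or] using hnac
  constructor
  · intro hfab hfbc
    exact hnac.1 (hfab.trans hfbc)
  · intro hfbc
    by_contra hfab
    exact hnac.2 ((hab.resolve_left hfab).trans (hbc.resolve_left hfbc))

theorem not_claw_isIndContained (f : W → X) (g : W → Y) :
    ¬ completeBipartiteGraph (Fin 1) (Fin 3) ⊴ bipartiteLineGraph f g := by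
  rintro ⟨e⟩
  set center := e (Sum.inl 0)
  set leaf : Fin 3 → W := fun j => e (Sum.inr j)
  have opposite : ∀ j k, j ≠ k → (f (leaf j) = f center ↔ ¬ f (leaf k) = f center) := by
    intro j k hjk
    rw [eq_comm (a := f (leaf k))]
    refine apply_eq_iff_apply_ne_of_induced_path (e.map_adj_iff.mpr ?_) (e.map_adj_iff.mpr ?_)
      (fun h => hjk (Sum.inr_injective (e.injective h))) (fun h => ?_)
    · simp
    · simp
    · simpa using e.map_adj_iff.mp h
  have h01 := opposite 0 1 (by decide)
  have h12 := opposite 1 2 (by decide)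
  have h02 := opposite 0 2 (by decide)
  tauto

theorem not_cycleGraph_isIndContained (f : W → X) (g : W → Y) {n : ℕ} (hodd : Odd n)
    (hn : 5 ≤ n) : ¬ cycleGraph n ⊴ bipartiteLineGraph f g := by
  rintro ⟨e⟩
  obtain ⟨m, rfl⟩ : ∃ m, n = m + 4 := ⟨n - 4, by omega⟩
  classical
  have alternate : ∀ i, f (e i) = f (e (i + 1)) ↔ ¬ f (e (i + 1)) = f (e (i + 1 + 1)) :=
    fun i => apply_eq_iff_apply_ne_of_induced_path (e.map_adj_iff.mpr (cycleGraph_adj_add_one i))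
      (e.map_adj_iff.mpr (cycleGraph_adj_add_one _)) (e.injective.ne (Fin.ne_add_one_add_one i))
      (fun h => cycleGraph_not_adj_add_two i (e.map_adj_iff.mp h))
  let edgeType : (cycleGraph (m + 4)).Coloring Bool :=
    Coloring.mk (fun i => decide (f (e i) = f (e (i + 1)))) fun {i j} hij => by
      rcases (cycleGraph_adj (n := m + 2)).mp hij with h | h
      · obtain rfl := sub_eq_iff_eq_add'.mp h
        rw [ne_eq, decide_eq_decide]
        have := alternate j
        tauto
      · obtain rfl := sub_eq_iff_eq_add'.mp h
        rw [ne_eq, decide_eq_decide]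
        have := alternate i
        tauto
  have := edgeType.colorable.chromaticNumber_le
  rw [chromaticNumber_cycleGraph_of_odd _ (by omega) hodd] at this
  norm_num at this

end bipartiteLineGraph

theorem not_exists_induce_iso_of_not_isIndContained {V U : Type*} {G : SimpleGraph V}
    {H : SimpleGraph U} (h : ¬ H ⊴ G) : ¬ ∃ s : Set V, Nonempty (G.induce s ≃g H) :=
  fun ⟨s, ⟨e⟩⟩ => h (isIndContained_iff_exists_iso_induce.mpr ⟨s, ⟨e.symm⟩⟩)

end SimpleGraph

theorem stmt_5_general {V : Type*} (G : SimpleGraph V) (r : LinearOrder V) :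
    (¬ ∃ s : Set {p : V × V // r.lt p.1 p.2 ∧ G.Adj p.1 p.2},
        Nonempty (((orderedLift G r).induce s) ≃g completeBipartiteGraph (Fin 1) (Fin 3))) ∧
    (¬ ∃ (n : ℕ) (s : Set {p : V × V // r.lt p.1 p.2 ∧ G.Adj p.1 p.2}),
        Odd n ∧ 5 ≤ n ∧ Nonempty (((orderedLift G r).induce s) ≃g cycleGraph n)) ∧
    (¬ ∃ s : Set {p : V × V // G.Adj p.1 p.2},
        Nonempty (((symLift G).induce s) ≃g completeBipartiteGraph (Fin 1) (Fin 3))) ∧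
    (¬ ∃ (n : ℕ) (s : Set {p : V × V // G.Adj p.1 p.2}),
        Odd n ∧ 5 ≤ n ∧ Nonempty (((symLift G).induce s) ≃g cycleGraph n)) := by
  rw [orderedLift_eq_bipartiteLineGraph, symLift_eq_bipartiteLineGraph]
  refine ⟨?_, ?_, ?_, ?_⟩
  · exact not_exists_induce_iso_of_not_isIndContained
      (bipartiteLineGraph.not_claw_isIndContained _ _)
  · rintro ⟨n, s, hodd, hn, e⟩
    exact not_exists_induce_iso_of_not_isIndContained
      (bipartiteLineGraph.not_cycleGraph_isIndContained _ _ hodd hn) ⟨s, e⟩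
  · exact not_exists_induce_iso_of_not_isIndContained
      (bipartiteLineGraph.not_claw_isIndContained _ _)
  · rintro ⟨n, s, hodd, hn, e⟩
    exact not_exists_induce_iso_of_not_isIndContained
      (bipartiteLineGraph.not_cycleGraph_isIndContained _ _ hodd hn) ⟨s, e⟩

/-- Both the ordered lift and the symmetric lift are claw-free (no induced `K_{1,3}`)
and odd-hole-free (no induced cycle of odd length at least 5). -/
theorem stmt_5 {V : Type*} [Fintype V] (G : SimpleGraph V) (r : LinearOrder V) :
    (¬ ∃ s : Set {p : V × V // r.lt p.1 p.2 ∧ G.Adj p.1 p.2},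
        Nonempty (((orderedLift G r).induce s) ≃g completeBipartiteGraph (Fin 1) (Fin 3))) ∧
    (¬ ∃ (n : ℕ) (s : Set {p : V × V // r.lt p.1 p.2 ∧ G.Adj p.1 p.2}),
        Odd n ∧ 5 ≤ n ∧ Nonempty (((orderedLift G r).induce s) ≃g cycleGraph n)) ∧
    (¬ ∃ s : Set {p : V × V // G.Adj p.1 p.2},
        Nonempty (((symLift G).induce s) ≃g completeBipartiteGraph (Fin 1) (Fin 3))) ∧
    (¬ ∃ (n : ℕ) (s : Set {p : V × V // G.Adj p.1 p.2}),
        Odd n ∧ 5 ≤ n ∧ Nonempty (((symLift G).induce s) ≃g cycleGraph n)) :=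
  stmt_5_general G r
end

section
/- Let G be a finite simple graph with at least one vertex that is d-regular with d ≥ 1. Then the clique number of the symmetric lift HL'₂(G) equals d: the largest size of a set of pairwise adjacent vertices in HL'₂(G) is exactly d. -/
open SimpleGraph

/-!
In fact `ω(HL'₂(G)) = Δ(G)` for every finite graph. A clique of `HL'₂(G)` either has all its
vertices in one row `{(u, v)}` or all in one column `{(v, u)}`: if two of them differ in the first
coordinate they share the second, and every third vertex differs in the first coordinate from one
of the two. A row or column is parametrised by the neighbours of `u`, so its size is at most
`deg u`, while the full row of `u` is a clique of size `deg u`.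
-/

namespace SimpleGraph

open Finset

variable {V : Type*} {G : SimpleGraph V}

lemma IsClique.symLift_fst_eq_or_snd_eq {s : Set {p : V × V // G.Adj p.1 p.2}}
    (hs : (symLift G).IsClique s) {a b : {p : V × V // G.Adj p.1 p.2}} (ha : a ∈ s) (hb : b ∈ s) :
    a.1.1 = b.1.1 ∨ a.1.2 = b.1.2 := by
  rcases eq_or_ne a b with rfl | hab
  · exact Or.inl rfl
  · exact (hs ha hb hab).2

lemma IsClique.symLift_row_or_column {s : Set {p : V × V // G.Adj p.1 p.2}}
    (hs : (symLift G).IsClique s) :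
    (∀ a ∈ s, ∀ b ∈ s, a.1.1 = b.1.1) ∨ (∀ a ∈ s, ∀ b ∈ s, a.1.2 = b.1.2) := by
  refine or_iff_not_imp_left.2 fun h => ?_
  push Not at h
  obtain ⟨a, ha, b, hb, hab⟩ := h
  have hsnd : ∀ c ∈ s, c.1.2 = a.1.2 := fun c hc => by
    have hca := hs.symLift_fst_eq_or_snd_eq hc ha
    have hcb := hs.symLift_fst_eq_or_snd_eq hc hb
    have hab' := (hs.symLift_fst_eq_or_snd_eq ha hb).resolve_left hab
    grind
  intro x hx y hy
  rw [hsnd x hx, hsnd y hy]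

variable [Fintype V] [DecidableRel G.Adj]

lemma card_le_degree_of_forall_fst_eq {s : Finset {p : V × V // G.Adj p.1 p.2}} {u : V}
    (hs : ∀ c ∈ s, c.1.1 = u) : #s ≤ G.degree u := by
  rw [← card_neighborFinset_eq_degree]
  refine card_le_card_of_injOn (fun c => c.1.2) (fun c hc => ?_) fun x hx y hy hxy => ?_
  · simpa [hs c hc] using c.2
  · exact Subtype.ext (Prod.ext ((hs x hx).trans (hs y hy).symm) hxy)

lemma card_le_degree_of_forall_snd_eq {s : Finset {p : V × V // G.Adj p.1 p.2}} {u : V}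
    (hs : ∀ c ∈ s, c.1.2 = u) : #s ≤ G.degree u := by
  rw [← card_neighborFinset_eq_degree]
  refine card_le_card_of_injOn (fun c => c.1.1) (fun c hc => ?_) fun x hx y hy hxy => ?_
  · simpa [hs c hc] using c.2.symm
  · exact Subtype.ext (Prod.ext hxy ((hs x hx).trans (hs y hy).symm))

lemma IsClique.card_le_maxDegree_of_symLift {s : Finset {p : V × V // G.Adj p.1 p.2}}
    (hs : (symLift G).IsClique (s : Set _)) : #s ≤ G.maxDegree := by
  obtain rfl | ⟨a, ha⟩ := s.eq_empty_or_nonempty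
  · simp
  rcases hs.symLift_row_or_column with hrow | hcol
  · exact (card_le_degree_of_forall_fst_eq fun c hc => hrow c hc a ha).trans
      (G.degree_le_maxDegree _)
  · exact (card_le_degree_of_forall_snd_eq fun c hc => hcol c hc a ha).trans
      (G.degree_le_maxDegree _)

lemma degree_le_cliqueNum_symLift (u : V) : G.degree u ≤ (symLift G).cliqueNum := by
  let row : G.neighborSet u ↪ {p : V × V // G.Adj p.1 p.2} :=
    ⟨fun v => ⟨(u, v), v.2⟩, fun v w h => Subtype.ext (congrArg (fun c => c.1.2) h)⟩
  have hrow : (symLift G).IsClique (univ.map row : Set _) := by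
    intro x hx y hy hxy
    simp only [coe_map, coe_univ, Set.image_univ, Set.mem_range] at hx hy
    obtain ⟨v, rfl⟩ := hx
    obtain ⟨w, rfl⟩ := hy
    exact ⟨hxy, Or.inl rfl⟩
  have hcard := hrow.card_le_cliqueNum
  rwa [card_map, card_univ, card_neighborSet_eq_degree] at hcard

theorem cliqueNum_symLift : (symLift G).cliqueNum = G.maxDegree := by
  refine le_antisymm ?_ (G.maxDegree_le_of_forall_degree_le _ degree_le_cliqueNum_symLift)
  obtain ⟨s, hs⟩ := (symLift G).exists_isNClique_cliqueNum
  exact hs.card_eq ▸ hs.isClique.card_le_maxDegree_of_symLift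

end SimpleGraph

theorem stmt_6_general {V : Type*} [Fintype V] [Nonempty V]
    (G : SimpleGraph V) [DecidableRel G.Adj]
    (d : ℕ) (hreg : G.IsRegularOfDegree d) :
    (symLift G).cliqueNum = d := by
  rw [cliqueNum_symLift, hreg.maxDegree_eq]

theorem stmt_6 {V : Type*} [Fintype V] [DecidableEq V] [Nonempty V]
    (G : SimpleGraph V) [DecidableRel G.Adj]
    (d : ℕ) (hd : 1 ≤ d) (hreg : G.IsRegularOfDegree d) :
    (symLift G).cliqueNum = d :=
  stmt_6_general G d hreg
end

section
/- Let G be a finite simple graph and let π be the map sending each vertex (u,v) of the symmetric lift HL'₂(G) to the unordered edge {u,v} of G. Then (i) for every edge e of G, the fiber π⁻¹(e) has exactly two elements, namely (u,v) and (v,u) where e = {u,v}; and (ii) for any two distinct edges e and f of G, e and f are adjacent in the line graph L(G) if and only if there exist vertices a ∈ π⁻¹(e) and b ∈ π⁻¹(f) that are adjacent in HL'₂(G). Consequently the quotient of HL'₂(G) by the involution (u,v) ↦ (v,u) is isomorphic to L(G). -/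
open SimpleGraph

/-- The twin relation on vertices of the symmetric lift: `(u,v)` is a twin of `(v,u)`. -/
def twinRel {V : Type*} (G : SimpleGraph V) :
    {p : V × V // G.Adj p.1 p.2} → {p : V × V // G.Adj p.1 p.2} → Prop :=
  fun a b => b.val = (a.val.2, a.val.1)

/-- The quotient of the symmetric lift by the involution `(u,v) ↦ (v,u)`: vertices are the
orbits, two distinct orbits being adjacent iff some representatives are adjacent. -/
def quotLift {V : Type*} (G : SimpleGraph V) : SimpleGraph (Quot (twinRel G)) where
  Adj c d := c ≠ d ∧ ∃ a b, Quot.mk (twinRel G) a = c ∧ Quot.mk (twinRel G) b = d ∧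
    (symLift G).Adj a b
  symm := ⟨fun c d h => ⟨h.1.symm, by
    obtain ⟨a, b, ha, hb, hab⟩ := h.2
    exact ⟨b, a, hb, ha, (symLift G).adj_symm hab⟩⟩⟩
  loopless := ⟨fun c h => h.1 rfl⟩

/-!
Sending `(u, v)` to `s(u, v)` identifies a lift exactly with itself and its twin `(v, u)`, so the
twin classes are in bijection with the edges. Two lifts are adjacent iff they agree in a
coordinate, i.e. the underlying edges share that endpoint; conversely two edges sharing `v` lift
to `(v, w)` and `(v, w')`. Hence the bijection carries the quotient adjacency onto the line graph.
-/

namespace SymLift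

variable {V : Type*} {G : SimpleGraph V}

def toEdge (a : {p : V × V // G.Adj p.1 p.2}) : G.edgeSet :=
  ⟨s(a.val.1, a.val.2), G.mem_edgeSet.mpr a.2⟩

theorem toEdge_eq_toEdge_iff {a b : {p : V × V // G.Adj p.1 p.2}} :
    toEdge a = toEdge b ↔ b = a ∨ twinRel G a b := by
  rw [toEdge, toEdge, Subtype.mk.injEq, Sym2.mk_eq_mk_iff, twinRel, ← Subtype.ext_iff]
  exact or_congr eq_comm ⟨fun h => by rw [h]; rfl, fun h => by rw [h]; rfl⟩

def swap (a : {p : V × V // G.Adj p.1 p.2}) : {p : V × V // G.Adj p.1 p.2} :=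
  ⟨a.val.swap, a.2.symm⟩

theorem twinRel_swap (a : {p : V × V // G.Adj p.1 p.2}) : twinRel G a (swap a) :=
  rfl

theorem ne_swap (a : {p : V × V // G.Adj p.1 p.2}) : a ≠ swap a :=
  fun h => a.2.ne (congrArg (·.val.1) h)

theorem exists_toEdge_eq (e : G.edgeSet) : ∃ a, toEdge a = e := by
  obtain ⟨e, he⟩ := e
  induction e using Sym2.ind with
  | _ u v => exact ⟨⟨(u, v), he⟩, rfl⟩

theorem exists_fiber_eq_pair (e : G.edgeSet) :
    ∃ a b : {p : V × V // G.Adj p.1 p.2}, a ≠ b ∧ b.val = (a.val.2, a.val.1) ∧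
      toEdge a = e ∧ toEdge b = e ∧ ∀ c, toEdge c = e → c = a ∨ c = b := by
  obtain ⟨a, rfl⟩ := exists_toEdge_eq e
  refine ⟨a, _, ne_swap a, twinRel_swap a, rfl,
    (toEdge_eq_toEdge_iff.mpr (.inr (twinRel_swap a))).symm, fun c hc => ?_⟩
  rcases toEdge_eq_toEdge_iff.mp hc.symm with rfl | hc
  · exact .inl rfl
  · exact .inr (Subtype.ext hc)

theorem lineGraph_adj_iff_exists_symLift_adj {e f : G.edgeSet} (hef : e ≠ f) :
    G.lineGraph.Adj e f ↔ ∃ a b, toEdge a = e ∧ toEdge b = f ∧ (symLift G).Adj a b := by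
  rw [lineGraph_adj_iff_exists, and_iff_right hef]
  constructor
  · rintro ⟨v, hve, hvf⟩
    obtain ⟨w, hw⟩ := Sym2.mem_iff_exists.mp hve
    obtain ⟨w', hw'⟩ := Sym2.mem_iff_exists.mp hvf
    have ha : toEdge ⟨(v, w), G.mem_edgeSet.mp (hw ▸ e.2)⟩ = e := Subtype.ext hw.symm
    have hb : toEdge ⟨(v, w'), G.mem_edgeSet.mp (hw' ▸ f.2)⟩ = f := Subtype.ext hw'.symm
    exact ⟨_, _, ha, hb, fun hab => hef (ha.symm.trans (hab ▸ hb)), .inl rfl⟩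
  · rintro ⟨a, b, rfl, rfl, -, h | h⟩
    · exact ⟨a.val.1, Sym2.mem_mk_left _ _, h ▸ Sym2.mem_mk_left _ _⟩
    · exact ⟨a.val.2, Sym2.mem_mk_right _ _, h ▸ Sym2.mem_mk_right _ _⟩

def quotToEdge : Quot (twinRel G) → G.edgeSet :=
  Quot.lift toEdge fun _ _ h => toEdge_eq_toEdge_iff.mpr (.inr h)

theorem mk_eq_mk_of_toEdge_eq {a b : {p : V × V // G.Adj p.1 p.2}} (h : toEdge a = toEdge b) :
    Quot.mk (twinRel G) a = Quot.mk (twinRel G) b := by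
  rcases toEdge_eq_toEdge_iff.mp h with rfl | h
  · rfl
  · exact Quot.sound h

theorem quotToEdge_bijective : Function.Bijective (quotToEdge (G := G)) := by
  refine ⟨fun c d h => ?_, fun e => ?_⟩
  · obtain ⟨a, rfl⟩ := Quot.exists_rep c
    obtain ⟨b, rfl⟩ := Quot.exists_rep d
    exact mk_eq_mk_of_toEdge_eq h
  · obtain ⟨a, rfl⟩ := exists_toEdge_eq e
    exact ⟨Quot.mk _ a, rfl⟩

theorem mk_eq_iff {a : {p : V × V // G.Adj p.1 p.2}} {c : Quot (twinRel G)} :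
    Quot.mk _ a = c ↔ toEdge a = quotToEdge c :=
  ⟨congrArg quotToEdge, fun h => quotToEdge_bijective.1 h⟩

theorem quotLift_adj_iff {c d : Quot (twinRel G)} :
    (quotLift G).Adj c d ↔ G.lineGraph.Adj (quotToEdge c) (quotToEdge d) := by
  by_cases hcd : c = d
  · subst hcd
    simp only [SimpleGraph.irrefl]
  · rw [lineGraph_adj_iff_exists_symLift_adj (quotToEdge_bijective.1.ne hcd)]
    simp only [quotLift, mk_eq_iff]
    exact and_iff_right hcd

noncomputable def quotLiftIsoLineGraph : quotLift G ≃g G.lineGraph where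
  toEquiv := Equiv.ofBijective quotToEdge quotToEdge_bijective
  map_rel_iff' := quotLift_adj_iff.symm

end SymLift

theorem stmt_11_general {V : Type*} (G : SimpleGraph V) :
    let π : {p : V × V // G.Adj p.1 p.2} → G.edgeSet :=
      fun a => ⟨s(a.val.1, a.val.2), G.mem_edgeSet.mpr a.2⟩
    -- (i) every fiber of π consists of exactly two elements, (u,v) and (v,u)
    (∀ e : G.edgeSet, ∃ a b : {p : V × V // G.Adj p.1 p.2},
        a ≠ b ∧ b.val = (a.val.2, a.val.1) ∧ π a = e ∧ π b = e ∧
        ∀ c, π c = e → c = a ∨ c = b) ∧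
    -- (ii) adjacency in the line graph corresponds to adjacency between fibers
    (∀ e f : G.edgeSet, e ≠ f →
        (G.lineGraph.Adj e f ↔ ∃ a b, π a = e ∧ π b = f ∧ (symLift G).Adj a b)) ∧
    -- consequently, the quotient of the symmetric lift by the involution is the line graph
    Nonempty (quotLift G ≃g G.lineGraph) :=
  ⟨SymLift.exists_fiber_eq_pair, fun _ _ => SymLift.lineGraph_adj_iff_exists_symLift_adj,
    ⟨SymLift.quotLiftIsoLineGraph⟩⟩

theorem stmt_11 {V : Type*} [Fintype V] (G : SimpleGraph V) :
    let π : {p : V × V // G.Adj p.1 p.2} → G.edgeSet :=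
      fun a => ⟨s(a.val.1, a.val.2), G.mem_edgeSet.mpr a.2⟩
    -- (i) every fiber of π consists of exactly two elements, (u,v) and (v,u)
    (∀ e : G.edgeSet, ∃ a b : {p : V × V // G.Adj p.1 p.2},
        a ≠ b ∧ b.val = (a.val.2, a.val.1) ∧ π a = e ∧ π b = e ∧
        ∀ c, π c = e → c = a ∨ c = b) ∧
    -- (ii) adjacency in the line graph corresponds to adjacency between fibers
    (∀ e f : G.edgeSet, e ≠ f →
        (G.lineGraph.Adj e f ↔ ∃ a b, π a = e ∧ π b = f ∧ (symLift G).Adj a b)) ∧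
    -- consequently, the quotient of the symmetric lift by the involution is the line graph
    Nonempty (quotLift G ≃g G.lineGraph) :=
  stmt_11_general G
end

section
/- Let G be a finite simple graph with a linear order on its vertex set, let A be the adjacency matrix of the symmetric lift HL'₂(G), let A_L be the adjacency matrix of the line graph L(G), and let M(G) be the signed overlap matrix of G. Then the characteristic polynomial of A equals the product of the characteristic polynomial of A_L and the characteristic polynomial of M(G). -/
open SimpleGraph

open scoped Classical in
/-- The signed overlap matrix `M(G)`: rows and columns are indexed by the edges of `G`,
oriented as pairs `(u,v)` with `u < v`; for distinct oriented edges the entry is `+1` if they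
share a tail or a head, `-1` if they overlap crosswise, and `0` otherwise. -/
noncomputable def signedOverlap {V : Type*} (G : SimpleGraph V) (r : LinearOrder V) :
    Matrix {p : V × V // r.lt p.1 p.2 ∧ G.Adj p.1 p.2}
      {p : V × V // r.lt p.1 p.2 ∧ G.Adj p.1 p.2} ℤ :=
  fun e f =>
    if e = f then 0
    else if e.val.1 = f.val.1 ∨ e.val.2 = f.val.2 then 1
    else if e.val.1 = f.val.2 ∨ e.val.2 = f.val.1 then -1
    else 0

/-!
Splitting every edge `{u, v}` of `G` with `u < v` into the arcs `(u, v)` and `(v, u)` writes the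
adjacency matrix of `HL'₂(G)` as a block matrix `[[B, C], [C, B]]` indexed by two copies of the
oriented edges: `B` records oriented edges sharing a tail or a head, `C` those overlapping
crosswise. Conjugating by `[[1, 1], [0, 1]]` makes it block triangular with diagonal blocks
`B + C` and `B - C`. Since `u < v` for every oriented edge, two of them never overlap both ways,
so `B + C` is the adjacency matrix of `L(G)` and `B - C = M(G)`.
-/

namespace Matrix

variable {n R : Type*} [DecidableEq n] [Fintype n] [CommRing R]

theorem det_fromBlocks_self_self (P Q : Matrix n n R) :
    (fromBlocks P Q Q P).det = (P + Q).det * (P - Q).det := by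
  have hconj : fromBlocks 1 1 0 1 * fromBlocks P Q Q P * fromBlocks 1 (-1) 0 1 =
      fromBlocks (P + Q) 0 Q (P - Q) := by
    simp only [fromBlocks_multiply]
    congr 1 <;>
      simp only [Matrix.one_mul, Matrix.mul_one, Matrix.zero_mul, Matrix.mul_zero, Matrix.mul_neg] <;>
      abel
  have hdet := congrArg det hconj
  rwa [det_mul, det_mul, det_fromBlocks_zero₂₁, det_fromBlocks_zero₂₁, det_fromBlocks_zero₁₂,
    det_one, one_mul, mul_one, one_mul] at hdet

theorem charmatrix_add (P Q : Matrix n n R) :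
    charmatrix (P + Q) = charmatrix P - Q.map Polynomial.C := by
  simp only [charmatrix, RingHom.mapMatrix_apply, Matrix.map_add _ (map_add _)]
  abel

theorem charpoly_fromBlocks_self_self (P Q : Matrix n n R) :
    (fromBlocks P Q Q P).charpoly = (P + Q).charpoly * (P - Q).charpoly := by
  have hsub : charmatrix (P - Q) = charmatrix P + Q.map Polynomial.C := by
    rw [sub_eq_add_neg, charmatrix_add, Matrix.map_neg _ (map_neg _), sub_neg_eq_add]
  rw [charpoly, charmatrix_fromBlocks, det_fromBlocks_self_self, charpoly, charpoly,
    charmatrix_add, hsub, sub_neg_eq_add, ← sub_eq_add_neg]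

end Matrix

@[simp]
theorem symLift_adj {V : Type*} {G : SimpleGraph V} {a b : {p : V × V // G.Adj p.1 p.2}} :
    (symLift G).Adj a b ↔ a ≠ b ∧ (a.1.1 = b.1.1 ∨ a.1.2 = b.1.2) :=
  Iff.rfl

namespace SimpleGraph

variable {V : Type*} [LinearOrder V] (G : SimpleGraph V)

abbrev OrientedEdge : Type _ := {p : V × V // p.1 < p.2 ∧ G.Adj p.1 p.2}

variable {G}

namespace OrientedEdge

theorem ne_swap (e f : G.OrientedEdge) : e.1 ≠ f.1.swap := fun h =>
  lt_asymm f.2.1 (by simpa [h] using e.2.1)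

theorem not_cross_of_sameEnd {e f : G.OrientedEdge} (h : e.1.1 = f.1.1 ∨ e.1.2 = f.1.2) :
    ¬(e.1.1 = f.1.2 ∨ e.1.2 = f.1.1) := by
  have he := e.2.1
  have hf := f.2.1
  rintro (h' | h') <;> rcases h with h | h <;> simp_all

end OrientedEdge

variable (G)

noncomputable def orientedEdgeSumEquiv :
    G.OrientedEdge ⊕ G.OrientedEdge ≃ {p : V × V // G.Adj p.1 p.2} :=
  Equiv.ofBijective (Sum.elim (fun e => ⟨e.1, e.2.2⟩) (fun e => ⟨e.1.swap, e.2.2.symm⟩)) <| by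
    refine ⟨?_, ?_⟩
    · rintro (e | e) (f | f) h <;> simp only [Sum.elim_inl, Sum.elim_inr, Subtype.mk.injEq] at h
      · exact congrArg Sum.inl (Subtype.ext h)
      · exact absurd h (e.ne_swap f)
      · exact absurd (by simpa using congrArg Prod.swap h) (e.ne_swap f)
      · exact congrArg Sum.inr (Subtype.ext (by simpa using congrArg Prod.swap h))
    · rintro ⟨⟨a, b⟩, hab⟩
      rcases lt_trichotomy a b with h | rfl | h
      · exact ⟨Sum.inl ⟨(a, b), h, hab⟩, rfl⟩
      · exact absurd rfl (G.ne_of_adj hab)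
      · exact ⟨Sum.inr ⟨(b, a), h, hab.symm⟩, rfl⟩

@[simp]
theorem coe_orientedEdgeSumEquiv_inl (e : G.OrientedEdge) :
    (G.orientedEdgeSumEquiv (.inl e) : V × V) = e.1 :=
  rfl

@[simp]
theorem coe_orientedEdgeSumEquiv_inr (e : G.OrientedEdge) :
    (G.orientedEdgeSumEquiv (.inr e) : V × V) = e.1.swap :=
  rfl

noncomputable def orientedEdgeEquivEdgeSet : G.OrientedEdge ≃ G.edgeSet :=
  Equiv.ofBijective (fun e => ⟨s(e.1.1, e.1.2), e.2.2⟩) <| by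
    refine ⟨fun e f h => ?_, ?_⟩
    · rcases Sym2.eq_iff.mp (congrArg Subtype.val h) with ⟨h1, h2⟩ | ⟨h1, h2⟩
      · exact Subtype.ext (Prod.ext h1 h2)
      · exact absurd (Prod.ext h1 h2) (e.ne_swap f)
    · rintro ⟨q, hq⟩
      induction q with
      | _ a b =>
        rcases lt_trichotomy a b with h | rfl | h
        · exact ⟨⟨(a, b), h, hq⟩, rfl⟩
        · exact absurd rfl (G.ne_of_adj hq)
        · exact ⟨⟨(b, a), h, hq.symm⟩, Subtype.ext Sym2.eq_swap⟩

@[simp]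
theorem coe_orientedEdgeEquivEdgeSet (e : G.OrientedEdge) :
    (G.orientedEdgeEquivEdgeSet e : Sym2 V) = s(e.1.1, e.1.2) :=
  rfl

theorem lineGraph_adj_orientedEdgeEquivEdgeSet {e f : G.OrientedEdge} :
    G.lineGraph.Adj (G.orientedEdgeEquivEdgeSet e) (G.orientedEdgeEquivEdgeSet f) ↔
      e ≠ f ∧ (e.1.1 = f.1.1 ∨ e.1.2 = f.1.2 ∨ e.1.1 = f.1.2 ∨ e.1.2 = f.1.1) := by
  rw [lineGraph_adj_iff_exists, (orientedEdgeEquivEdgeSet G).injective.ne_iff]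
  refine and_congr_right fun _ => ?_
  simp only [coe_orientedEdgeEquivEdgeSet, Sym2.mem_iff, or_and_right, exists_or, exists_eq_left]
  tauto

variable (R : Type*)

def sameEndMatrix [Zero R] [One R] : Matrix G.OrientedEdge G.OrientedEdge R :=
  Matrix.of fun e f => if e ≠ f ∧ (e.1.1 = f.1.1 ∨ e.1.2 = f.1.2) then 1 else 0

def crossEndMatrix [Zero R] [One R] : Matrix G.OrientedEdge G.OrientedEdge R :=
  Matrix.of fun e f => if e.1.1 = f.1.2 ∨ e.1.2 = f.1.1 then 1 else 0

theorem reindex_adjMatrix_symLift [Zero R] [One R] [DecidableRel (symLift G).Adj] :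
    Matrix.reindex G.orientedEdgeSumEquiv.symm G.orientedEdgeSumEquiv.symm
        ((symLift G).adjMatrix R) =
      Matrix.fromBlocks (G.sameEndMatrix R) (G.crossEndMatrix R) (G.crossEndMatrix R)
        (G.sameEndMatrix R) := by
  ext (e | e) (f | f) <;> simp [adjMatrix_apply, sameEndMatrix, crossEndMatrix, or_comm]

theorem sameEndMatrix_add_crossEndMatrix [AddMonoidWithOne R] [DecidableRel G.lineGraph.Adj] :
    G.sameEndMatrix R + G.crossEndMatrix R =
      Matrix.reindex G.orientedEdgeEquivEdgeSet.symm G.orientedEdgeEquivEdgeSet.symm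
        (G.lineGraph.adjMatrix R) := by
  ext e f
  have hcross := OrientedEdge.not_cross_of_sameEnd (e := e) (f := f)
  by_cases hef : e = f <;> by_cases h : e.1.1 = f.1.1 ∨ e.1.2 = f.1.2 <;>
    simp_all [adjMatrix_apply, sameEndMatrix, crossEndMatrix, lineGraph_adj_orientedEdgeEquivEdgeSet]

theorem sameEndMatrix_sub_crossEndMatrix :
    G.sameEndMatrix ℤ - G.crossEndMatrix ℤ = signedOverlap G ‹_› := by
  ext e f
  have hcross := OrientedEdge.not_cross_of_sameEnd (e := e) (f := f)
  by_cases hef : e = f <;> by_cases h : e.1.1 = f.1.1 ∨ e.1.2 = f.1.2 <;>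
    simp_all [signedOverlap, sameEndMatrix, crossEndMatrix, apply_ite Neg.neg]

end SimpleGraph

open scoped Classical in
/-- The characteristic polynomial of the adjacency matrix of the symmetric lift is the product
of the characteristic polynomials of the adjacency matrix of the line graph and of the signed
overlap matrix. -/
theorem stmt_12 {V : Type*} [Fintype V] (G : SimpleGraph V) (r : LinearOrder V) :
    ((symLift G).adjMatrix ℤ).charpoly =
      (G.lineGraph.adjMatrix ℤ).charpoly * (signedOverlap G r).charpoly := by
  let _ : LinearOrder V := r
  rw [← Matrix.charpoly_reindex G.orientedEdgeSumEquiv.symm, G.reindex_adjMatrix_symLift,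
    Matrix.charpoly_fromBlocks_self_self, G.sameEndMatrix_add_crossEndMatrix,
    G.sameEndMatrix_sub_crossEndMatrix, Matrix.charpoly_reindex]
end

section
/- Let G be a finite simple graph. Then the characteristic polynomial of the adjacency matrix of the line graph L(G) divides the characteristic polynomial of the adjacency matrix of the symmetric lift HL'₂(G), and the characteristic polynomial of the Laplacian matrix of L(G) divides the characteristic polynomial of the Laplacian matrix of HL'₂(G). In particular, every adjacency (respectively Laplacian) eigenvalue of L(G) is, with at least its multiplicity, an adjacency (respectively Laplacian) eigenvalue of HL'₂(G). -/
/-! The flip `(u, v) ↦ (v, u)` is a fixed-point-free involution of `HL'₂(G)` whose orbits are the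
edges of `G`, and `(u, v) ↦ {u, v}` makes `HL'₂(G)` a double cover of `L(G)`: every neighbour of
`{u, v}` in `L(G)` lifts to exactly one neighbour of `(u, v)`. Listing the vertices as a section
`r` of the cover followed by its flip puts any flip-invariant matrix in the form `[[X, Y], [Y, X]]`,
which is similar over any commutative ring to `[[X + Y, Y], [0, X - Y]]`, so its characteristic
polynomial is divisible by that of `X + Y`. For the adjacency and Laplacian matrices of `HL'₂(G)`,
`X + Y` is the corresponding matrix of `L(G)`. -/

open SimpleGraph

open Matrix Function

namespace Matrix

variable {R n : Type*} [CommRing R] [DecidableEq n] [Fintype n]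

theorem fromBlocks_self_conj (X Y : Matrix n n R) :
    fromBlocks 1 0 (-1) 1 * fromBlocks X Y Y X * fromBlocks 1 0 1 1 =
      fromBlocks (X + Y) Y 0 (X - Y) := by
  simp only [fromBlocks_multiply]
  congr 1 <;> noncomm_ring

theorem charpoly_fromBlocks_self (X Y : Matrix n n R) :
    (fromBlocks X Y Y X).charpoly = (X + Y).charpoly * (X - Y).charpoly := by
  have hinv : fromBlocks (1 : Matrix n n R) 0 1 1 * fromBlocks 1 0 (-1) 1 =
      (1 : Matrix (n ⊕ n) (n ⊕ n) R) := by
    rw [fromBlocks_multiply, ← fromBlocks_one]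
    congr 1 <;> noncomm_ring
  rw [← charpoly_fromBlocks_zero₂₁, ← fromBlocks_self_conj, Matrix.mul_assoc,
    charpoly_mul_comm, Matrix.mul_assoc, hinv, Matrix.mul_one]

end Matrix

structure IsTwoSheeted {W E : Type*} (π : W → E) (σ : W → W) : Prop where
  ne_self : ∀ w, σ w ≠ w
  eq_iff : ∀ a b, π a = π b ↔ a = b ∨ a = σ b
  surjective : Surjective π

namespace IsTwoSheeted

variable {W E : Type*} {π : W → E} {σ : W → W}

theorem map_swap (h : IsTwoSheeted π σ) (w : W) : π (σ w) = π w :=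
  (h.eq_iff _ _).2 (Or.inr rfl)

theorem involutive (h : IsTwoSheeted π σ) : Involutive σ := fun w =>
  ((h.eq_iff _ _).1 ((h.map_swap _).trans (h.map_swap w))).resolve_right (h.ne_self _)

theorem bijective_sumElim (h : IsTwoSheeted π σ) {r : E → W} (hr : ∀ e, π (r e) = e) :
    Bijective (Sum.elim r (σ ∘ r)) := by
  have hr_inj : Injective r := LeftInverse.injective hr
  have hr_ne : ∀ e f, r e ≠ σ (r f) := fun e f hef => by
    obtain rfl : e = f := by rw [← hr e, ← hr f, hef, h.map_swap]
    exact h.ne_self _ hef.symm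
  refine ⟨?_, fun w => ?_⟩
  · rintro (e | e) (f | f) hef
    · exact congrArg Sum.inl (hr_inj hef)
    · exact (hr_ne e f hef).elim
    · exact (hr_ne f e hef.symm).elim
    · exact congrArg Sum.inr (hr_inj (h.involutive.injective hef))
  · rcases (h.eq_iff w (r (π w))).1 (hr _).symm with hw | hw
    · exact ⟨Sum.inl (π w), hw.symm⟩
    · exact ⟨Sum.inr (π w), hw.symm⟩

variable [Fintype W] [Fintype E] {R : Type*}

theorem sum_apply [AddCommMonoid R] (h : IsTwoSheeted π σ) {M : Matrix W W R}
    {Q : Matrix E E R} (hQ : ∀ a b, Q (π a) (π b) = M a b + M a (σ b)) (a : W) :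
    ∑ f, Q (π a) f = ∑ w, M a w := by
  obtain ⟨r, hr⟩ := h.surjective.hasRightInverse
  rw [← (Equiv.ofBijective _ (h.bijective_sumElim hr)).sum_comp, Fintype.sum_sum_type,
    ← Finset.sum_add_distrib]
  exact Finset.sum_congr rfl fun f _ => by simpa [hr f] using hQ a (r f)

theorem charpoly_dvd [CommRing R] [DecidableEq W] [DecidableEq E] (h : IsTwoSheeted π σ)
    {M : Matrix W W R} (hM : ∀ a b, M (σ a) (σ b) = M a b) {Q : Matrix E E R}
    (hQ : ∀ a b, Q (π a) (π b) = M a b + M a (σ b)) : Q.charpoly ∣ M.charpoly := by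
  obtain ⟨r, hr⟩ := h.surjective.hasRightInverse
  let ε := Equiv.ofBijective _ (h.bijective_sumElim hr)
  have hQr : Q = M.submatrix r r + M.submatrix r (σ ∘ r) := by
    ext e f
    simpa [hr e, hr f] using hQ (r e) (r f)
  have hblocks : M.submatrix ε ε =
      fromBlocks (M.submatrix r r) (M.submatrix r (σ ∘ r))
        (M.submatrix r (σ ∘ r)) (M.submatrix r r) := by
    ext (e | e) (f | f)
    · rfl
    · rfl
    · simpa [ε, h.involutive (r f)] using hM (r e) (σ (r f))
    · simp [ε, hM]
  refine ⟨(M.submatrix r r - M.submatrix r (σ ∘ r)).charpoly, ?_⟩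
  rw [← charpoly_reindex ε.symm, reindex_apply, Equiv.symm_symm, hblocks,
    charpoly_fromBlocks_self, hQr]

end IsTwoSheeted

structure IsDoubleCover {W E : Type*} (H : SimpleGraph W) (K : SimpleGraph E) (π : W → E)
    (σ : W → W) : Prop extends IsTwoSheeted π σ where
  adj_map_iff : ∀ a b, K.Adj (π a) (π b) ↔ H.Adj a b ∨ H.Adj a (σ b)
  not_adj_and_adj_swap : ∀ a b, ¬ (H.Adj a b ∧ H.Adj a (σ b))

namespace IsDoubleCover

variable {W E : Type*} {H : SimpleGraph W} {K : SimpleGraph E} {π : W → E} {σ : W → W}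

theorem adj_swap_iff (h : IsDoubleCover H K π σ) (a b : W) : H.Adj (σ a) (σ b) ↔ H.Adj a b := by
  have key : ∀ a b, H.Adj a b → H.Adj (σ a) (σ b) := fun a b hab => by
    have hK := (h.adj_map_iff a b).2 (Or.inl hab)
    rw [← h.map_swap a, ← h.map_swap b, h.adj_map_iff, h.involutive b] at hK
    exact hK.resolve_right fun hab' => h.not_adj_and_adj_swap b a ⟨hab.symm, hab'.symm⟩
  exact ⟨fun hab => by simpa only [h.involutive _] using key _ _ hab, key a b⟩

theorem adjMatrix_apply_map {R : Type*} [AddMonoidWithOne R] [DecidableRel H.Adj]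
    [DecidableRel K.Adj] (h : IsDoubleCover H K π σ) (a b : W) :
    K.adjMatrix R (π a) (π b) = H.adjMatrix R a b + H.adjMatrix R a (σ b) := by
  by_cases hab : H.Adj a b <;> by_cases hab' : H.Adj a (σ b)
  · exact (h.not_adj_and_adj_swap a b ⟨hab, hab'⟩).elim
  all_goals simp [adjMatrix_apply, h.adj_map_iff, hab, hab']

variable [Fintype W] [Fintype E] [DecidableRel H.Adj] [DecidableRel K.Adj]

theorem degree_map (h : IsDoubleCover H K π σ) (a : W) : K.degree (π a) = H.degree a := by
  simpa [← card_neighborFinset_eq_degree, neighborFinset_eq_filter] using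
    h.sum_apply (h.adjMatrix_apply_map (R := ℕ)) a

theorem degree_swap (h : IsDoubleCover H K π σ) (a : W) : H.degree (σ a) = H.degree a := by
  rw [← h.degree_map, h.map_swap, h.degree_map]

variable [DecidableEq W] [DecidableEq E]

theorem lapMatrix_apply_map {R : Type*} [AddCommGroupWithOne R] (h : IsDoubleCover H K π σ)
    (a b : W) : K.lapMatrix R (π a) (π b) = H.lapMatrix R a b + H.lapMatrix R a (σ b) := by
  simp only [lapMatrix, degMatrix, Matrix.sub_apply, diagonal_apply, h.adjMatrix_apply_map]
  by_cases hab : π a = π b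
  · rcases (h.eq_iff a b).1 hab with rfl | rfl
    · rw [if_pos rfl, if_pos rfl, if_neg (h.ne_self a).symm, h.degree_map]
      abel
    · rw [if_pos hab, if_neg (h.ne_self b), if_pos rfl, h.degree_map]
      abel
  · obtain ⟨hab₁, hab₂⟩ : a ≠ b ∧ a ≠ σ b := by simpa [h.eq_iff] using hab
    rw [if_neg hab, if_neg hab₁, if_neg hab₂]
    abel

theorem charpoly_adjMatrix_dvd {R : Type*} [CommRing R] (h : IsDoubleCover H K π σ) :
    (K.adjMatrix R).charpoly ∣ (H.adjMatrix R).charpoly :=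
  h.charpoly_dvd (by simp [adjMatrix_apply, h.adj_swap_iff]) h.adjMatrix_apply_map

theorem charpoly_lapMatrix_dvd {R : Type*} [CommRing R] (h : IsDoubleCover H K π σ) :
    (K.lapMatrix R).charpoly ∣ (H.lapMatrix R).charpoly :=
  h.charpoly_dvd (by simp [lapMatrix, degMatrix, diagonal_apply, adjMatrix_apply,
    h.involutive.injective.eq_iff, h.degree_swap, h.adj_swap_iff]) h.lapMatrix_apply_map

end IsDoubleCover

namespace symLift

variable {V : Type*} (G : SimpleGraph V)

def swap (w : {p : V × V // G.Adj p.1 p.2}) : {p : V × V // G.Adj p.1 p.2} :=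
  ⟨w.1.swap, w.2.symm⟩

def edge (w : {p : V × V // G.Adj p.1 p.2}) : G.edgeSet :=
  ⟨s(w.1.1, w.1.2), w.2⟩

theorem isDoubleCover : IsDoubleCover (symLift G) G.lineGraph (edge G) (swap G) where
  ne_self w hw := G.ne_of_adj w.2 (congrArg (·.1.1) hw).symm
  eq_iff := by
    rintro ⟨⟨x, y⟩, -⟩ ⟨⟨u, v⟩, -⟩
    simp [edge, swap, Subtype.ext_iff]
  surjective := by
    rintro ⟨e, he⟩
    induction e using Sym2.ind with
    | _ u v => exact ⟨⟨(u, v), he⟩, rfl⟩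
  adj_map_iff := by
    rintro ⟨⟨x, y⟩, hxy⟩ ⟨⟨u, v⟩, huv⟩
    have hxy_ne := G.ne_of_adj hxy
    have huv_ne := G.ne_of_adj huv
    simp only [edge, lineGraph_adj_iff_exists, ne_eq, Sym2.mem_iff, exists_eq_or_imp,
      existsAndEq, true_and, symLift, Subtype.mk.injEq, Prod.mk.injEq, not_and, swap,
      Prod.swap_prod_mk]
    grind
  not_adj_and_adj_swap := by
    rintro ⟨⟨x, y⟩, hxy⟩ ⟨⟨u, v⟩, huv⟩
    have hxy_ne := G.ne_of_adj hxy
    have huv_ne := G.ne_of_adj huv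
    simp only [symLift, ne_eq, Subtype.mk.injEq, Prod.mk.injEq, not_and, swap,
      Prod.swap_prod_mk, not_or, and_imp]
    grind

end symLift

open scoped Classical in
/-- The characteristic polynomial of the adjacency (resp. Laplacian) matrix of the line graph
divides the characteristic polynomial of the adjacency (resp. Laplacian) matrix of the
symmetric lift; in particular every adjacency (resp. Laplacian) eigenvalue of `L(G)` occurs,
with at least its multiplicity, as an eigenvalue of `HL'₂(G)`. -/
theorem stmt_13 {V : Type*} [Fintype V] (G : SimpleGraph V) :
    (G.lineGraph.adjMatrix ℤ).charpoly ∣ ((symLift G).adjMatrix ℤ).charpoly ∧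
    (G.lineGraph.lapMatrix ℤ).charpoly ∣ ((symLift G).lapMatrix ℤ).charpoly :=
  ⟨(symLift.isDoubleCover G).charpoly_adjMatrix_dvd,
    (symLift.isDoubleCover G).charpoly_lapMatrix_dvd⟩
end
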